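/- For commuting linear operators D₁, D₂, D₃ on a vector space (e.g., discrete derivatives on a periodic grid) and any symmetric matrix field H_{jm} = H_{mj}, the composed operator ε_{ijk}ε_{lmn} D_i D_l applied twice, namely ε_{abk}ε_{cdn} D_a D_c (ε_{ijb}ε_{lmd} D_i D_l H_{jm}), equals (Σ_p D_p²)² H_{kn} whenever Σ_m D_m H_{jm} = 0 for all j. -/
import Mathlib


open Finset Matrix

noncomputable section

/-- Levi-Civita symbol on `Fin 3`. -/
def eps (i j k : Fin 3) : ℝ :=
  ((j.val : ℝ) - i.val) * ((k.val : ℝ) - i.val) * ((k.val : ℝ) - j.val) / 2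

lemma eps_000 : eps 0 0 0 = 0 := by norm_num [eps]
lemma eps_001 : eps 0 0 1 = 0 := by norm_num [eps]
lemma eps_002 : eps 0 0 2 = 0 := by norm_num [eps]
lemma eps_010 : eps 0 1 0 = 0 := by norm_num [eps]
lemma eps_011 : eps 0 1 1 = 0 := by norm_num [eps]
lemma eps_012 : eps 0 1 2 = 1 := by norm_num [eps]
lemma eps_020 : eps 0 2 0 = 0 := by norm_num [eps]
lemma eps_021 : eps 0 2 1 = -1 := by norm_num [eps]
lemma eps_022 : eps 0 2 2 = 0 := by norm_num [eps]
lemma eps_100 : eps 1 0 0 = 0 := by norm_num [eps]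
lemma eps_101 : eps 1 0 1 = 0 := by norm_num [eps]
lemma eps_102 : eps 1 0 2 = -1 := by norm_num [eps]
lemma eps_110 : eps 1 1 0 = 0 := by norm_num [eps]
lemma eps_111 : eps 1 1 1 = 0 := by norm_num [eps]
lemma eps_112 : eps 1 1 2 = 0 := by norm_num [eps]
lemma eps_120 : eps 1 2 0 = 1 := by norm_num [eps]
lemma eps_121 : eps 1 2 1 = 0 := by norm_num [eps]
lemma eps_122 : eps 1 2 2 = 0 := by norm_num [eps]
lemma eps_200 : eps 2 0 0 = 0 := by norm_num [eps]
lemma eps_201 : eps 2 0 1 = 1 := by norm_num [eps]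
lemma eps_202 : eps 2 0 2 = 0 := by norm_num [eps]
lemma eps_210 : eps 2 1 0 = -1 := by norm_num [eps]
lemma eps_211 : eps 2 1 1 = 0 := by norm_num [eps]
lemma eps_212 : eps 2 1 2 = 0 := by norm_num [eps]
lemma eps_220 : eps 2 2 0 = 0 := by norm_num [eps]
lemma eps_221 : eps 2 2 1 = 0 := by norm_num [eps]
lemma eps_222 : eps 2 2 2 = 0 := by norm_num [eps]

set_option maxHeartbeats 2000000

/-- For commuting linear operators `D₁, D₂, D₃` and a symmetric field `H` with
`Σ_m D_m H_{jm} = 0`, applying the incompatibility operator twice equals `(Σ_p D_p²)² H`. -/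
theorem statement15 (V : Type*) [AddCommGroup V] [Module ℝ V]
    (D : Fin 3 → V →ₗ[ℝ] V)
    (hcomm : ∀ (p q : Fin 3) (v : V), D p (D q v) = D q (D p v))
    (H : Fin 3 → Fin 3 → V)
    (hsym : ∀ j m, H j m = H m j)
    (hdiv : ∀ j, ∑ m, D m (H j m) = 0) :
    ∀ k n, (∑ a, ∑ b, ∑ c, ∑ d, eps a b k •
        (eps c d n • D a (D c
          (∑ i, ∑ j, ∑ l, ∑ m, eps i j b • (eps l m d • D i (D l (H j m))))))) =
      ∑ p, ∑ q, D p (D p (D q (D q (H k n)))) := by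
  have hd : ∀ j, D 0 (H j 0) + D 1 (H j 1) + D 2 (H j 2) = 0 := by
    intro j; have := hdiv j; rwa [Fin.sum_univ_three] at this
  have hd0 : D 2 (H 0 2) = -D 0 (H 0 0) - D 1 (H 0 1) := by
    have := hd 0; linear_combination (norm := module) this
  have hd1 : D 2 (H 1 2) = -D 0 (H 0 1) - D 1 (H 1 1) := by
    have := hd 1; rw [hsym 1 0] at this; linear_combination (norm := module) this
  have hd2 : D 2 (H 2 2) = -D 0 (H 0 2) - D 1 (H 1 2) := by
    have := hd 2; rw [hsym 2 0, hsym 2 1] at this; linear_combination (norm := module) this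
  have h3 : ∀ (k : Fin 3), k = 0 ∨ k = 1 ∨ k = 2 := by decide
  intro k n
  rcases h3 k with rfl|rfl|rfl <;> rcases h3 n with rfl|rfl|rfl <;>
  · simp only [Fin.sum_univ_three, Fin.isValue, eps_000, eps_001, eps_002, eps_010, eps_011,
      eps_012, eps_020, eps_021, eps_022, eps_100, eps_101, eps_102, eps_110, eps_111, eps_112,
      eps_120, eps_121, eps_122, eps_200, eps_201, eps_202, eps_210, eps_211, eps_212, eps_220,
      eps_221, eps_222, zero_smul, smul_zero, add_zero, zero_add, one_smul, neg_one_smul,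
      neg_smul, map_add, map_neg, map_sub, neg_neg, map_zero]
    simp only [hsym 1 0, hsym 2 0, hsym 2 1, hd0, hd1, hd2, map_add, map_sub, map_neg,
      hcomm 1 0, hcomm 2 0, hcomm 2 1]
    abel
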